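/- For r₁ = (1 + √3 − 12^{1/4})/2, the identity (2r₁³ − 1)/(r₁⁶ − 1) = 1/(r₁² + 1) holds (equivalently (2r₁³ − 1)(r₁² + 1) = r₁⁶ − 1). -/
import Mathlib


theorem r1_identity (r₁ : ℝ) (hr₁ : r₁ = (1 + Real.sqrt 3 - Real.sqrt (Real.sqrt 12)) / 2) :
    (2 * r₁ ^ 3 - 1) / (r₁ ^ 6 - 1) = 1 / (r₁ ^ 2 + 1) ∧
    (2 * r₁ ^ 3 - 1) * (r₁ ^ 2 + 1) = r₁ ^ 6 - 1 := by
  set a := Real.sqrt 3 with hadef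
  set b := Real.sqrt (Real.sqrt 12) with hbdef
  have ha : a ^ 2 = 3 := Real.sq_sqrt (by norm_num)
  have ha0 : 0 ≤ a := Real.sqrt_nonneg 3
  have hb0 : 0 ≤ b := Real.sqrt_nonneg _
  have h12 : Real.sqrt 12 = 2 * a := by
    rw [hadef, show (12 : ℝ) = 2 ^ 2 * 3 by norm_num, Real.sqrt_mul (by positivity),
      Real.sqrt_sq (by norm_num)]
  have hb : b ^ 2 = 2 * a := by
    rw [hbdef, Real.sq_sqrt (by rw [h12]; positivity), h12]
  have hq : r₁ ^ 2 - (1 + a) * r₁ + 1 = 0 := by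
    rw [hr₁]; linear_combination (1 / 4 : ℝ) * hb - (1 / 4 : ℝ) * ha
  have h4 : r₁ ^ 4 - 2 * r₁ ^ 3 - 2 * r₁ + 1 = 0 := by
    linear_combination (r₁ ^ 2 + (a - 1) * r₁ + 1) * hq + r₁ ^ 2 * ha
  have key : (2 * r₁ ^ 3 - 1) * (r₁ ^ 2 + 1) = r₁ ^ 6 - 1 := by
    linear_combination (-(r₁ ^ 2)) * h4
  have ha1 : 1 < a := by nlinarith
  have hrpos : 0 < r₁ := by rw [hr₁]; nlinarith
  have hrlt : r₁ < 1 := by rw [hr₁]; nlinarith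
  have h6 : r₁ ^ 6 - 1 < 0 := by nlinarith [pow_lt_one₀ hrpos.le hrlt (by norm_num : 6 ≠ 0)]
  have h2 : (0 : ℝ) < r₁ ^ 2 + 1 := by positivity
  refine ⟨?_, key⟩
  rw [div_eq_div_iff (ne_of_lt h6) (ne_of_gt h2)]
  linarith [key]
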